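/- For every positive integer n, the product of divisors function Π(n) = Π_{d | n} d satisfies log(Π(n)) = Σ_{k=1}^{n} μ(k / gcd(n,k)) · (φ(k) / φ(k / gcd(n,k))) · Σ_{l=1}^{⌊n/k⌋} log(k·l)/(k·l). -/

import Mathlib

open Finset Real ArithmeticFunction
open scoped ArithmeticFunction.Moebius ArithmeticFunction.zeta Nat

/-!
The coefficient of the theorem is Ramanujan's sum `c_k(n)`, and its divisor sums are
`∑_{k ∣ m} c_k(n) = m` if `m ∣ n` and `0` otherwise: both sides are multiplicative in `m`, and
on a prime power `p ^ i` the sum telescopes through `c_{p^j}(n) = φ(p^j)` for `p^j ∣ n`,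
`c_{p^(v+1)}(n) = -p^v` where `p^v ∥ n`, and `0` beyond. Hence
`log Π(n) = ∑_{m ≤ n} (∑_{k ∣ m} c_k(n)) log m / m`, and writing `m = k l` and exchanging the
sums gives the formula.
-/

theorem Nat.gcd_prime_pow_eq_pow_min {n p : ℕ} (hn : n ≠ 0) (hp : p.Prime) (j : ℕ) :
    n.gcd (p ^ j) = p ^ min (n.factorization p) j := by
  obtain ⟨i, hij, hi⟩ := (Nat.dvd_prime_pow hp).1 (Nat.gcd_dvd_right n (p ^ j))
  have hin : i ≤ n.factorization p :=
    (hp.pow_dvd_iff_le_factorization hn).1 (hi ▸ Nat.gcd_dvd_left n _)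
  have hmin : min (n.factorization p) j ≤ i :=
    (Nat.pow_dvd_pow_iff_le_right hp.one_lt).1 <| hi ▸ Nat.dvd_gcd
      ((hp.pow_dvd_iff_le_factorization hn).2 (min_le_left _ _)) (pow_dvd_pow p (min_le_right _ _))
  rw [hi, le_antisymm hmin (le_min hin hij)]

/-- `ramanujanSum n k` is Ramanujan's sum `c_k(n)`, in Hölder's closed form. -/
noncomputable def ramanujanSum (n : ℕ) : ArithmeticFunction ℝ :=
  ⟨fun k => μ (k / n.gcd k) * ((φ k : ℝ) / φ (k / n.gcd k)), by simp⟩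

theorem ramanujanSum_apply (n k : ℕ) :
    ramanujanSum n k = μ (k / n.gcd k) * ((φ k : ℝ) / φ (k / n.gcd k)) := rfl

theorem isMultiplicative_ramanujanSum (n : ℕ) : (ramanujanSum n).IsMultiplicative := by
  refine ⟨by simp [ramanujanSum_apply], fun {a b} hab => ?_⟩
  have hga : n.gcd a ∣ a := Nat.gcd_dvd_right n a
  have hgb : n.gcd b ∣ b := Nat.gcd_dvd_right n b
  have hquot : a * b / n.gcd (a * b) = a / n.gcd a * (b / n.gcd b) := by
    rw [Nat.Coprime.gcd_mul n hab, Nat.div_mul_div_comm hga hgb]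
  have hcop : (a / n.gcd a).Coprime (b / n.gcd b) :=
    (hab.coprime_dvd_left (Nat.div_dvd_of_dvd hga)).coprime_dvd_right (Nat.div_dvd_of_dvd hgb)
  simp only [ramanujanSum_apply, hquot, isMultiplicative_moebius.map_mul_of_coprime hcop,
    Nat.totient_mul hab, Nat.totient_mul hcop]
  push_cast
  rw [mul_div_mul_comm]
  ring

theorem ramanujanSum_apply_prime_pow {n p : ℕ} (hn : n ≠ 0) (hp : p.Prime) (j : ℕ) :
    ramanujanSum n (p ^ j) =
      if j ≤ n.factorization p then (φ (p ^ j) : ℝ)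
      else if j = n.factorization p + 1 then -(p : ℝ) ^ n.factorization p
      else 0 := by
  set v := n.factorization p
  have hquot : p ^ j / n.gcd (p ^ j) = p ^ (j - min v j) := by
    rw [Nat.gcd_prime_pow_eq_pow_min hn hp, Nat.pow_div (min_le_right _ _) hp.pos]
  rw [ramanujanSum_apply, hquot]
  split_ifs with hle hsucc
  · simp [show j - min v j = 0 by omega]
  · subst hsucc
    have hp1 : (1 : ℝ) < p := by exact_mod_cast hp.one_lt
    rw [show v + 1 - min v (v + 1) = 1 by omega, pow_one, moebius_apply_prime hp,
      Nat.totient_prime_pow_succ hp, Nat.totient_prime hp]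
    push_cast [Nat.cast_sub hp.one_lt.le]
    field_simp [(by linarith : (p : ℝ) - 1 ≠ 0)]
  · rw [moebius_apply_prime_pow hp (by omega), if_neg (by omega)]
    simp

noncomputable def idOnDivisors (n : ℕ) : ArithmeticFunction ℝ :=
  ⟨fun m => if m ∣ n then (m : ℝ) else 0, by simp⟩

theorem idOnDivisors_apply (n m : ℕ) : idOnDivisors n m = if m ∣ n then (m : ℝ) else 0 := rfl

theorem isMultiplicative_idOnDivisors (n : ℕ) : (idOnDivisors n).IsMultiplicative := by
  refine ⟨by simp [idOnDivisors_apply], fun {a b} hab => ?_⟩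
  have hdvd : a * b ∣ n ↔ a ∣ n ∧ b ∣ n :=
    ⟨fun h => ⟨dvd_of_mul_right_dvd h, dvd_of_mul_left_dvd h⟩,
      fun h => hab.mul_dvd_of_dvd_of_dvd h.1 h.2⟩
  simp only [idOnDivisors_apply, hdvd]
  split_ifs <;> simp_all

theorem sum_range_ramanujanSum_prime_pow {n p : ℕ} (hn : n ≠ 0) (hp : p.Prime) (i : ℕ) :
    ∑ j ∈ range (i + 1), ramanujanSum n (p ^ j) =
      if i ≤ n.factorization p then (p : ℝ) ^ i else 0 := by
  induction i with
  | zero => simp [ramanujanSum_apply]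
  | succ i ih =>
    rw [sum_range_succ, ih, ramanujanSum_apply_prime_pow hn hp]
    split_ifs <;> try omega
    · rw [Nat.totient_prime_pow_succ hp]
      push_cast [Nat.cast_sub hp.one_lt.le]
      ring
    · simp_all
    · simp

theorem ramanujanSum_mul_zeta (n : ℕ) : ramanujanSum n * ζ = idOnDivisors n := by
  rcases eq_or_ne n 0 with rfl | hn
  · ext m
    rw [coe_mul_zeta_apply, idOnDivisors_apply, if_pos (dvd_zero m)]
    conv_rhs => rw [← Nat.sum_totient m]
    push_cast
    refine sum_congr rfl fun k hk => ?_
    simp [ramanujanSum_apply, Nat.div_self (Nat.pos_of_mem_divisors hk)]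
  · refine ((isMultiplicative_ramanujanSum n).mul isMultiplicative_zeta.natCast
      ).eq_iff_eq_on_prime_powers _ _ (isMultiplicative_idOnDivisors n) |>.2 fun p i hp => ?_
    rw [coe_mul_zeta_apply, Nat.sum_divisors_prime_pow hp, sum_range_ramanujanSum_prime_pow hn hp,
      idOnDivisors_apply]
    simp only [hp.pow_dvd_iff_le_factorization hn, Nat.cast_pow]

theorem sum_divisors_ramanujanSum (n m : ℕ) :
    ∑ k ∈ m.divisors, ramanujanSum n k = if m ∣ n then (m : ℝ) else 0 := by
  rw [← idOnDivisors_apply, ← ramanujanSum_mul_zeta, coe_mul_zeta_apply]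

theorem Finset.sum_Icc_sum_divisors_mul {R : Type*} [NonUnitalNonAssocSemiring R]
    (f g : ℕ → R) (N : ℕ) :
    ∑ m ∈ Icc 1 N, (∑ k ∈ m.divisors, f k) * g m =
      ∑ k ∈ Icc 1 N, f k * ∑ l ∈ Icc 1 (N / k), g (k * l) := by
  simp_rw [sum_mul, mul_sum]
  rw [sum_comm' (t' := Icc 1 N) (s' := fun k => {m ∈ Icc 1 N | k ∣ m})]
  · refine sum_congr rfl fun k hk => ?_
    have hk : 0 < k := (mem_Icc.1 hk).1
    refine sum_nbij' (· / k) (k * ·) ?_ ?_ ?_ ?_ ?_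
    · intro m hm
      obtain ⟨⟨hm1, hmN⟩, l, rfl⟩ := by simpa only [mem_filter, mem_Icc] using hm
      simp only [mem_Icc, Nat.mul_div_cancel_left l hk]
      refine ⟨Nat.pos_of_mul_pos_left hm1, (Nat.le_div_iff_mul_le hk).2 (by linarith)⟩
    · intro l hl
      obtain ⟨hl1, hlN⟩ := mem_Icc.1 hl
      simp only [mem_filter, mem_Icc, dvd_mul_right, and_true]
      exact ⟨Nat.mul_pos hk hl1, by linarith [(Nat.le_div_iff_mul_le hk).1 hlN]⟩
    · intro m hm
      exact Nat.mul_div_cancel' (mem_filter.1 hm).2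
    · intro l _
      exact Nat.mul_div_cancel_left l hk
    · intro m hm
      rw [Nat.mul_div_cancel' (mem_filter.1 hm).2]
  · intro m k
    simp only [mem_Icc, Nat.mem_divisors, mem_filter]
    constructor
    · rintro ⟨⟨hm1, hmN⟩, hkm, -⟩
      exact ⟨⟨⟨hm1, hmN⟩, hkm⟩, Nat.pos_of_dvd_of_pos hkm hm1, (Nat.le_of_dvd hm1 hkm).trans hmN⟩
    · rintro ⟨⟨⟨hm1, hmN⟩, hkm⟩, -⟩
      exact ⟨⟨hm1, hmN⟩, hkm, by omega⟩

theorem log_prod_divisors_formula_general (n : ℕ) :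
    Real.log (∏ d ∈ n.divisors, (d : ℝ)) =
      ∑ k ∈ Icc 1 n,
        (μ (k / Nat.gcd n k) : ℝ) *
          ((Nat.totient k : ℝ) / (Nat.totient (k / Nat.gcd n k) : ℝ)) *
          ∑ l ∈ Icc 1 (n / k), Real.log ((k : ℝ) * l) / ((k : ℝ) * l) := by
  calc Real.log (∏ d ∈ n.divisors, (d : ℝ))
      = ∑ m ∈ Icc 1 n, (∑ k ∈ m.divisors, ramanujanSum n k) * (Real.log m / m) := by
        rw [Real.log_prod fun d hd => by exact_mod_cast (Nat.pos_of_mem_divisors hd).ne',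
          Nat.divisors, Finset.Ico_add_one_right_eq_Icc, sum_filter]
        refine sum_congr rfl fun m hm => ?_
        have hm : (m : ℝ) ≠ 0 := by exact_mod_cast (Nat.one_le_iff_ne_zero.1 (mem_Icc.1 hm).1)
        rw [sum_divisors_ramanujanSum]
        split_ifs
        · field_simp
        · simp
    _ = _ := by
        rw [sum_Icc_sum_divisors_mul]
        push_cast
        rfl

theorem log_prod_divisors_formula (n : ℕ) (hn : 0 < n) :
    Real.log (∏ d ∈ n.divisors, (d : ℝ)) =
      ∑ k ∈ Icc 1 n,
        (μ (k / Nat.gcd n k) : ℝ) *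
          ((Nat.totient k : ℝ) / (Nat.totient (k / Nat.gcd n k) : ℝ)) *
          ∑ l ∈ Icc 1 (n / k), Real.log ((k : ℝ) * l) / ((k : ℝ) * l) :=
  log_prod_divisors_formula_general n
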